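/- Let G be any two-by-two game with Player One payoffs X₁, X₂, X₃, X₄. Then in every mixed-strategy Nash equilibrium (ν,μ) of G^Q, Player One's expected payoff satisfies P₁^Q(ν,μ) ≥ (X₁ + X₂ + X₃ + X₄)/4. -/

import Mathlib

noncomputable section

open MeasureTheory

local notation "ℍ" => Quaternion ℝ

instance : MeasurableSpace (Quaternion ℝ) := borel _
instance : BorelSpace (Quaternion ℝ) := ⟨rfl⟩

/-- The four real coordinates of a quaternion: `p = π₁(p) + π₂(p)i + π₃(p)j + π₄(p)k`. -/
def piQ (t : Fin 4) (p : ℍ) : ℝ := ![p.re, p.imI, p.imJ, p.imK] t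

/-- The standard inner product on ℍ ≅ ℝ⁴. -/
def qinner (p q : ℍ) : ℝ := ∑ t : Fin 4, piQ t p * piQ t q

/-- The quaternions `i`, `j`, `k`. -/
def qI : ℍ := ⟨0, 1, 0, 0⟩
def qJ : ℍ := ⟨0, 0, 1, 0⟩
def qK : ℍ := ⟨0, 0, 0, 1⟩

/-- A mixed quantum strategy: a Borel probability measure on the unit quaternions. -/
def IsMixed (μ : Measure ℍ) : Prop :=
  IsProbabilityMeasure μ ∧ μ {p : ℍ | ‖p‖ = 1} = 1

/-- Quantum payoff with payoff vector `X`: `P^Q(p,q) = Σ_t π_t(pq)² X_t`. -/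
def payoff (X : Fin 4 → ℝ) (p q : ℍ) : ℝ :=
  ∑ t : Fin 4, (piQ t (p * q)) ^ 2 * X t

/-- Expected payoff of a pair of mixed strategies. -/
def payoffM (X : Fin 4 → ℝ) (ν μ : Measure ℍ) : ℝ :=
  ∫ p, ∫ q, payoff X p q ∂μ ∂ν

/-- Mixed-strategy Nash equilibrium of the quantum game with payoff vectors `X`, `Y`. -/
def IsNash (X Y : Fin 4 → ℝ) (ν μ : Measure ℍ) : Prop :=
  IsMixed ν ∧ IsMixed μ ∧
    (∀ ν' : Measure ℍ, IsMixed ν' → payoffM X ν' μ ≤ payoffM X ν μ) ∧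
    (∀ μ' : Measure ℍ, IsMixed μ' → payoffM Y ν μ' ≤ payoffM Y ν μ)

/-- Equivalence of mixed quantum strategies. -/
def StratEquiv (μ μ' : Measure ℍ) : Prop :=
  ∀ p : ℍ, ‖p‖ = 1 → ∀ t : Fin 4,
    ∫ q, (piQ t (p * q)) ^ 2 ∂μ = ∫ q, (piQ t (p * q)) ^ 2 ∂μ'

/-- Equivalence of pairs of mixed strategies: `(ν,μ) ∼ (ν',μ')` iff there is a unit
quaternion `u` with `ν' ∼ ν·u` and `μ' ∼ u⁻¹·μ`. -/
def PairEquiv (ν μ ν' μ' : Measure ℍ) : Prop :=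
  ∃ u : ℍ, ‖u‖ = 1 ∧
    StratEquiv (Measure.map (fun p => p * u) ν) ν' ∧
    StratEquiv (Measure.map (fun q => u⁻¹ * q) μ) μ'

/-- A generic two-by-two game: all payoffs distinct and all pairwise sums distinct. -/
def Generic (X Y : Fin 4 → ℝ) : Prop :=
  Function.Injective X ∧ Function.Injective Y ∧
    (∀ s t s' t' : Fin 4, s < t → s' < t' → X s + X t = X s' + X t' → s = s' ∧ t = t') ∧
    (∀ s t s' t' : Fin 4, s < t → s' < t' → Y s + Y t = Y s' + Y t' → s = s' ∧ t = t')

/-- `K(p) = π₁(p)π₂(p)π₃(p)π₄(p)`. -/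
def K (p : ℍ) : ℝ := p.re * p.imI * p.imJ * p.imK

/-- Intertwined quadruple of quaternions. -/
def Intertwined (p q r s : ℍ) : Prop :=
  ∃ α : ℝ, α ≠ 0 ∧ ∀ X Y : ℝ, α * K (X • p + Y • q) = K (X • r + Y • s)

/-- Fully intertwined quadruple of quaternions. -/
def FullyIntertwined (p q r s : ℍ) : Prop :=
  Intertwined p q r s ∧ Intertwined p r q s

/-- `p` is an optimal response for Player One to the mixed strategy `μ`. -/
def Optimal₁ (X : Fin 4 → ℝ) (μ : Measure ℍ) (p : ℍ) : Prop :=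
  ‖p‖ = 1 ∧ ∀ p' : ℍ, ‖p'‖ = 1 → ∫ q, payoff X p' q ∂μ ≤ ∫ q, payoff X p q ∂μ

/-- `q` is an optimal response for Player Two to the mixed strategy `ν`. -/
def Optimal₂ (Y : Fin 4 → ℝ) (ν : Measure ℍ) (q : ℍ) : Prop :=
  ‖q‖ = 1 ∧ ∀ q' : ℍ, ‖q'‖ = 1 → ∫ p, payoff Y p q' ∂ν ≤ ∫ p, payoff Y p q ∂ν

/-!
Player One can always deviate to the mixture playing `1, i, j, k` with probability `1/4` each.
Since left multiplication by these units permutes the coordinates of `q` up to sign, against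
any unit `q` the four payoffs sum to `X₁ + X₂ + X₃ + X₄`. So this deviation earns exactly the
average against every mixed strategy `μ`, and a best response earns at least as much.
-/

open scoped ENNReal

lemma piQ_eq_linearIsometryEquivTuple (t : Fin 4) (p : ℍ) :
    piQ t p = Quaternion.linearIsometryEquivTuple p t := by
  fin_cases t <;> rfl

@[fun_prop]
lemma continuous_piQ (t : Fin 4) : Continuous (piQ t) := by
  simp_rw [funext (piQ_eq_linearIsometryEquivTuple t)]
  exact (PiLp.continuous_apply 2 _ t).comp Quaternion.linearIsometryEquivTuple.continuous

lemma sum_piQ_sq (p : ℍ) : ∑ t, piQ t p ^ 2 = ‖p‖ ^ 2 := by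
  rw [← Quaternion.linearIsometryEquivTuple.norm_map, EuclideanSpace.real_norm_sq_eq]
  simp_rw [piQ_eq_linearIsometryEquivTuple]

lemma piQ_sq_le_norm_sq (t : Fin 4) (p : ℍ) : piQ t p ^ 2 ≤ ‖p‖ ^ 2 :=
  sum_piQ_sq p ▸ Finset.single_le_sum (fun s _ => sq_nonneg (piQ s p)) (Finset.mem_univ t)

lemma continuous_payoff (X : Fin 4 → ℝ) (p : ℍ) : Continuous (payoff X p) := by
  unfold payoff
  fun_prop

lemma norm_payoff_le (X : Fin 4 → ℝ) (p q : ℍ) :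
    ‖payoff X p q‖ ≤ (∑ t, |X t|) * ‖p * q‖ ^ 2 := by
  rw [Finset.sum_mul]
  refine (norm_sum_le _ _).trans (Finset.sum_le_sum fun t _ => ?_)
  rw [norm_mul, norm_pow, Real.norm_eq_abs, Real.norm_eq_abs, sq_abs, mul_comm]
  exact mul_le_mul_of_nonneg_left (piQ_sq_le_norm_sq t _) (abs_nonneg _)

lemma IsMixed.ae_norm_eq_one {μ : Measure ℍ} (hμ : IsMixed μ) : ∀ᵐ q ∂μ, ‖q‖ = 1 := by
  have := hμ.1
  exact (mem_ae_iff_prob_eq_one (isClosed_eq continuous_norm continuous_const).measurableSet).2 hμ.2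

lemma integrable_payoff {μ : Measure ℍ} (hμ : IsMixed μ) (X : Fin 4 → ℝ) (p : ℍ) :
    Integrable (payoff X p) μ := by
  have := hμ.1
  refine (integrable_const ((∑ t, |X t|) * ‖p‖ ^ 2)).mono'
    (continuous_payoff X p).aestronglyMeasurable ?_
  filter_upwards [hμ.ae_norm_eq_one] with q hq
  simpa [norm_mul, hq] using norm_payoff_le X p q

def oneIJK : Fin 4 → ℍ := ![1, qI, qJ, qK]

lemma norm_oneIJK (s : Fin 4) : ‖oneIJK s‖ = 1 := by
  rw [← pow_eq_one_iff_of_nonneg (norm_nonneg _) two_ne_zero, ← sum_piQ_sq]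
  fin_cases s <;> simp [oneIJK, piQ, qI, qJ, qK, Fin.sum_univ_four, Quaternion.re_one,
    Quaternion.imI_one, Quaternion.imJ_one, Quaternion.imK_one]

/-- Left multiplication by `1, i, j, k` permutes the coordinates of `q` up to sign. -/
lemma sum_piQ_oneIJK_mul_sq (t : Fin 4) (q : ℍ) :
    ∑ s, piQ t (oneIJK s * q) ^ 2 = ‖q‖ ^ 2 := by
  rw [← sum_piQ_sq]
  fin_cases t <;> simp [oneIJK, piQ, qI, qJ, qK, Fin.sum_univ_four, Quaternion.re_one,
    Quaternion.imI_one, Quaternion.imJ_one, Quaternion.imK_one] <;> ring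

lemma sum_payoff_oneIJK (X : Fin 4 → ℝ) (q : ℍ) :
    ∑ s, payoff X (oneIJK s) q = (∑ t, X t) * ‖q‖ ^ 2 := by
  calc ∑ s, payoff X (oneIJK s) q = ∑ t, (∑ s, piQ t (oneIJK s * q) ^ 2) * X t := by
        simp only [payoff, Finset.sum_mul]
        exact Finset.sum_comm
    _ = (∑ t, X t) * ‖q‖ ^ 2 := by simp_rw [sum_piQ_oneIJK_mul_sq, ← Finset.mul_sum, mul_comm]

section UniformMixture

variable {α ι : Type*} [MeasurableSpace α] [Fintype ι]

def uniformMixture (b : ι → α) : Measure α :=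
  (Fintype.card ι : ℝ≥0∞)⁻¹ • ∑ i, Measure.dirac (b i)

lemma uniformMixture_apply_eq_one [Nonempty ι] {b : ι → α} {s : Set α} (hb : ∀ i, b i ∈ s) :
    uniformMixture b s = 1 := by
  simpa [uniformMixture, Measure.dirac_apply_of_mem (hb _)] using
    ENNReal.inv_mul_cancel (by simp) (by simp)

lemma integral_uniformMixture [MeasurableSingletonClass α] (b : ι → α) (f : α → ℝ) :
    ∫ a, f a ∂uniformMixture b = (Fintype.card ι : ℝ)⁻¹ * ∑ i, f (b i) := by
  rw [uniformMixture, integral_smul_measure, integral_finsetSum_measure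
    fun i _ => integrable_dirac enorm_lt_top]
  simp [integral_dirac]

end UniformMixture

lemma isMixed_uniformMixture_oneIJK : IsMixed (uniformMixture oneIJK) :=
  ⟨⟨uniformMixture_apply_eq_one fun _ => Set.mem_univ _⟩,
    uniformMixture_apply_eq_one norm_oneIJK⟩

lemma payoffM_uniformMixture_oneIJK (X : Fin 4 → ℝ) {μ : Measure ℍ} (hμ : IsMixed μ) :
    payoffM X (uniformMixture oneIJK) μ = (∑ t, X t) / 4 := by
  have := hμ.1
  have hsum : ∫ q, ∑ s, payoff X (oneIJK s) q ∂μ = ∑ t, X t := by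
    rw [integral_congr_ae (g := fun _ => ∑ t, X t), integral_const, probReal_univ, one_smul]
    filter_upwards [hμ.ae_norm_eq_one] with q hq
    simp [sum_payoff_oneIJK, hq]
  rw [payoffM, integral_uniformMixture, ← integral_finsetSum _ fun s _ => integrable_payoff hμ X _,
    hsum]
  simp [div_eq_inv_mul]

/-- In every mixed-strategy quantum Nash equilibrium, Player One earns at
least the average `(X₁ + X₂ + X₃ + X₄)/4` of the four possible payoffs. -/
theorem nash_payoff_ge_average (X Y : Fin 4 → ℝ) (ν μ : Measure ℍ)
    (hnash : IsNash X Y ν μ) :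
    (∑ t : Fin 4, X t) / 4 ≤ payoffM X ν μ := by
  obtain ⟨-, hμ, hbest₁, -⟩ := hnash
  rw [← payoffM_uniformMixture_oneIJK X hμ]
  exact hbest₁ _ isMixed_uniformMixture_oneIJK
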